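/- arXiv:1411.6951 — 2 statements merged into one kernel-verified Lean document; each statement's English description precedes it below -/
import Mathlib

section
/- Let v > 0, 0 ≤ n ≤ 2k with v, q₁,…,q_k, p₁,…,p_n satisfying: Φ(x) = v + 2Σ_j G_{q_j}(x) - Σ_i G_{p_i}(x) where G_p is the periodic Green's function with singularity at p, the mutual distances |q_j - q_h|, |q_j - p_i| are at least 5, and the local masses λ_j (the finite part of Φ at q_j) satisfy λ_j > λ₀. Then for λ₀ sufficiently large (depending only on n, k, and a bound for the positions), there exist radii δ(λ_j) ∈ (1/λ_j, 2/λ_j] such that Φ ≥ 1 on the complement of {p₁,…,p_n} ∪ ⋃_j B_{δ(λ_j)}(q_j). -/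
/- STATEMENT 14: Localization of the region {Φ < 1} for the sum of periodic Dirac
monopoles Φ = v + 2Σ_j G_{q_j} - Σ_i G_{p_i}.  We model ℝ²×S¹ by 2π-periodic
functions on ℝ³; Φ is harmonic away from the lattice translates of the points
p_i, q_j, with the near-singularity expansions Φ = λ_j - 1/ρ_j + O(ρ_j) at q_j and
Φ = c_i + 1/(2ρ_i) + O(ρ_i) at p_i (O-constant C), mutual distances at least 5,
positions bounded by R, and Φ → +∞ at infinity (or Φ → v with v > 1 when n = 2k).
Conclusion: if all local masses λ_j exceed a λ₀ depending only on n, k, C, R, there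
are radii δ(λ_j) ∈ (1/λ_j, 2/λ_j] with Φ ≥ 1 away from the singularities p and the
balls B_{δ(λ_j)} around (the translates of) the q_j. -/

open Filter

noncomputable section

/-- The Euclidean Laplacian on `EuclideanSpace ℝ (Fin m)`. -/
noncomputable def lap {m : ℕ} (f : EuclideanSpace ℝ (Fin m) → ℝ)
    (x : EuclideanSpace ℝ (Fin m)) : ℝ :=
  ∑ i : Fin m, fderiv ℝ (fun y => fderiv ℝ f y (EuclideanSpace.single i 1)) x
    (EuclideanSpace.single i 1)

/-- Unit vector in the periodic (circle) direction. -/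
noncomputable def e3 : EuclideanSpace ℝ (Fin 3) := EuclideanSpace.single (2 : Fin 3) (1:ℝ)

/-!
Near `q_j` the expansion gives `Φ > 1` on the annulus `2 / λ_j ≤ ρ_j < 1` once `λ_j > 2 + 2|C|`;
near `p_i` the pole `1 / (2ρ_i)` gives `Φ ≥ 1` on a small punctured ball; and `Φ ≥ 1` far out.
On the closed periodic set `K` of points avoiding the balls of radius `2 / λ_j` around the `q_j`
and smaller balls around the `p_i`, `Φ` is harmonic and every point where `Φ < 1` is interior.
For `ε > 0` the function `Φ - ε x₀²`, whose Laplacian is `-2ε`, attains its minimum over the part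
of `K` in a bounded cylinder and a slab of two periods; by periodicity the minimum point can be
moved to the middle period, so if `Φ < 1` there it would be an interior local minimum, which is
impossible. Letting `ε → 0` gives `Φ ≥ 1` on `K`.
-/

open Set Metric Topology

theorem IsLocalMin.deriv_deriv_nonneg {g : ℝ → ℝ} {t : ℝ} (hmin : IsLocalMin g t)
    (hc : ContinuousAt g t) : 0 ≤ deriv (deriv g) t := by
  by_contra! hneg
  have hmax := isLocalMax_of_deriv_deriv_neg hneg hmin.deriv_eq_zero hc
  have hconst : g =ᶠ[𝓝 t] fun _ => g t := by
    filter_upwards [hmin, hmax] with s hs₁ hs₂ using le_antisymm hs₂ hs₁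
  have hderiv : deriv g =ᶠ[𝓝 t] fun _ => 0 := by
    filter_upwards [hconst.eventuallyEq_nhds] with s hs
    rw [hs.deriv_eq, deriv_const]
  rw [hderiv.deriv_eq, deriv_const] at hneg
  exact hneg.false

section SecondDerivative

variable {E : Type*} [NormedAddCommGroup E] [NormedSpace ℝ E] {f g : E → ℝ} {x : E}

theorem ContDiffAt.eventually_differentiableAt (hf : ContDiffAt ℝ 2 f x) :
    ∀ᶠ y in 𝓝 x, DifferentiableAt ℝ f y :=
  (hf.eventually (by simp)).mono fun _ hy => hy.differentiableAt (by norm_num)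

theorem ContDiffAt.differentiableAt_fderiv_apply (hf : ContDiffAt ℝ 2 f x) (v : E) :
    DifferentiableAt ℝ (fun y => fderiv ℝ f y v) x :=
  ((hf.fderiv_right (m := 1) (by norm_num)).differentiableAt (by norm_num)).clm_apply
    (differentiableAt_const v)

theorem IsLocalMin.fderiv_fderiv_apply_nonneg (hmin : IsLocalMin f x) (hf : ContDiffAt ℝ 2 f x)
    (v : E) : 0 ≤ fderiv ℝ (fun y => fderiv ℝ f y v) x v := by
  set line : ℝ → E := fun t => x + t • v
  have hline : ∀ t, HasDerivAt line v t := fun t => by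
    simpa [line] using ((hasDerivAt_id t).smul_const v).const_add x
  have hline0 : line 0 = x := by simp [line]
  have hcont : Continuous line := by fun_prop
  have hmin' : IsLocalMin (f ∘ line) 0 := by
    rw [← hline0] at hmin; exact hmin.comp_continuous hcont.continuousAt
  have hderiv : deriv (f ∘ line) =ᶠ[𝓝 0] fun t => fderiv ℝ f (line t) v := by
    have := hcont.continuousAt.preimage_mem_nhds (hline0 ▸ hf.eventually_differentiableAt)
    filter_upwards [this] with t ht
    exact (ht.hasFDerivAt.comp_hasDerivAt t (hline t)).deriv
  have hsecond : HasDerivAt (fun t => fderiv ℝ f (line t) v)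
      (fderiv ℝ (fun y => fderiv ℝ f y v) x v) 0 :=
    (hf.differentiableAt_fderiv_apply v).hasFDerivAt.comp_hasDerivAt_of_eq 0 (hline 0)
      hline0.symm
  have := hmin'.deriv_deriv_nonneg (hf.continuousAt.comp_of_eq hcont.continuousAt hline0)
  rwa [hderiv.deriv_eq, hsecond.deriv] at this

theorem fderiv_fderiv_apply_sub (hf : ContDiffAt ℝ 2 f x) (hg : ContDiffAt ℝ 2 g x) (v : E) :
    fderiv ℝ (fun y => fderiv ℝ (fun w => f w - g w) y v) x v
      = fderiv ℝ (fun y => fderiv ℝ f y v) x v - fderiv ℝ (fun y => fderiv ℝ g y v) x v := by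
  have h : (fun y => fderiv ℝ (fun w => f w - g w) y v) =ᶠ[𝓝 x]
      fun y => fderiv ℝ f y v - fderiv ℝ g y v := by
    filter_upwards [hf.eventually_differentiableAt, hg.eventually_differentiableAt]
      with y hfy hgy
    rw [fderiv_fun_sub hfy hgy, sub_apply]
  rw [h.fderiv_eq, fderiv_fun_sub (hf.differentiableAt_fderiv_apply v)
    (hg.differentiableAt_fderiv_apply v), sub_apply]

theorem fderiv_fderiv_apply_const_mul_sq (c : ℝ) (L : E →L[ℝ] ℝ) (v : E) :
    fderiv ℝ (fun y => fderiv ℝ (fun w => c * L w ^ 2) y v) x v = 2 * c * L v ^ 2 := by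
  have h : (fun y => fderiv ℝ (fun w => c * L w ^ 2) y v) = fun y => (2 * c * L v) * L y := by
    ext y
    have := ((L.hasFDerivAt (x := y)).pow 2 |>.const_mul c).fderiv
    rw [this]
    simp only [Nat.add_one_sub_one, pow_one, nsmul_eq_mul, Nat.cast_ofNat,
      smul_apply, smul_eq_mul]
    ring
  rw [h, fderiv_const_mul L.differentiableAt, L.fderiv]
  simp only [smul_apply, smul_eq_mul]
  ring

end SecondDerivative

section Laplacian

variable {m : ℕ} {f g : EuclideanSpace ℝ (Fin m) → ℝ} {x : EuclideanSpace ℝ (Fin m)}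

theorem IsLocalMin.lap_nonneg (hmin : IsLocalMin f x) (hf : ContDiffAt ℝ 2 f x) : 0 ≤ lap f x :=
  Finset.sum_nonneg fun _ _ => hmin.fderiv_fderiv_apply_nonneg hf _

theorem lap_sub (hf : ContDiffAt ℝ 2 f x) (hg : ContDiffAt ℝ 2 g x) :
    lap (fun y => f y - g y) x = lap f x - lap g x := by
  simp only [lap, fderiv_fderiv_apply_sub hf hg, Finset.sum_sub_distrib]

theorem lap_const_mul_sq_apply (c : ℝ) (a : Fin m) :
    lap (fun w : EuclideanSpace ℝ (Fin m) => c * w a ^ 2) x = 2 * c := by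
  change ∑ i, fderiv ℝ (fun y => fderiv ℝ (fun w => c * EuclideanSpace.proj a w ^ 2) y _) x _ = _
  simp only [fderiv_fderiv_apply_const_mul_sq]
  simp [PiLp.single_apply]

theorem not_isLocalMin_sub_const_mul_sq_apply (hf : ContDiffAt ℝ 2 f x) (hlap : lap f x = 0)
    {ε : ℝ} (hε : 0 < ε) (a : Fin m) : ¬ IsLocalMin (fun y => f y - ε * y a ^ 2) x := by
  intro hmin
  have hq : ContDiffAt ℝ 2 (fun w : EuclideanSpace ℝ (Fin m) => ε * w a ^ 2) x := by fun_prop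
  have := hmin.lap_nonneg (hf.sub hq)
  rw [lap_sub hf hq, hlap, lap_const_mul_sq_apply] at this
  linarith

end Laplacian

theorem Function.Periodic.apply_add_mul_int_smul {E β : Type*} [AddCommGroup E] [Module ℝ E]
    {f : E → β} {c : ℝ} {w : E} (hf : Function.Periodic f (c • w)) (m : ℤ) (y : E) :
    f (y + (c * m : ℝ) • w) = f y := by
  rw [mul_comm, ← smul_smul, Int.cast_smul_eq_zsmul]
  exact hf.zsmul m y

theorem Function.Periodic.apply_sub_mul_int_smul {E β : Type*} [AddCommGroup E] [Module ℝ E]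
    {f : E → β} {c : ℝ} {w : E} (hf : Function.Periodic f (c • w)) (m : ℤ) (y : E) :
    f (y - (c * m : ℝ) • w) = f y := by
  rw [← hf.apply_add_mul_int_smul m, sub_add_cancel]

theorem Function.Periodic.forall_dist_add_mul_int_smul {E β : Type*} [SeminormedAddCommGroup E]
    [Module ℝ E] {f : E → β} {c : ℝ} {w a : E} (hf : Function.Periodic f (c • w))
    {P : ℝ → β → Prop} (h : ∀ y, P (dist y a) (f y)) (m : ℤ) (y : E) :
    P (dist y (a + (c * m : ℝ) • w)) (f y) := by
  simpa only [dist_sub_eq_dist_add_left, hf.apply_sub_mul_int_smul] using h (y - (c * m : ℝ) • w)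

theorem exists_int_abs_add_mul_sub_le {p : ℝ} (hp : 0 < p) (a b : ℝ) :
    ∃ m : ℤ, |a + p * m - b| ≤ p / 2 := by
  refine ⟨round ((b - a) / p), ?_⟩
  have h : a + p * round ((b - a) / p) - b = -(p * ((b - a) / p - round ((b - a) / p))) := by
    field_simp
    ring
  rw [h, abs_neg, abs_mul, abs_of_pos hp]
  linarith [mul_le_mul_of_nonneg_left (abs_sub_round ((b - a) / p)) hp.le]

open Real

local notation "E³" => EuclideanSpace ℝ (Fin 3)

def cylRadius (x : E³) : ℝ := √(x 0 ^ 2 + x 1 ^ 2)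

theorem continuous_cylRadius : Continuous cylRadius := by
  unfold cylRadius; fun_prop

theorem abs_apply_zero_le_cylRadius (x : E³) : |x 0| ≤ cylRadius x :=
  Real.abs_le_sqrt (by nlinarith [sq_nonneg (x 1)])

theorem norm_le_cylRadius_add_abs (x : E³) : ‖x‖ ≤ cylRadius x + |x 2| := by
  have hR : cylRadius x ^ 2 = x 0 ^ 2 + x 1 ^ 2 := Real.sq_sqrt (by positivity)
  have hR0 : 0 ≤ cylRadius x := Real.sqrt_nonneg _
  rw [EuclideanSpace.norm_eq, Fin.sum_univ_three, Real.sqrt_le_iff]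
  simp only [Real.norm_eq_abs, sq_abs]
  exact ⟨by positivity, by nlinarith [abs_nonneg (x 2), sq_abs (x 2)]⟩

theorem cylRadius_add_smul_e3 (x : E³) (t : ℝ) : cylRadius (x + t • e3) = cylRadius x := by
  simp [cylRadius, e3]

theorem add_smul_e3_apply_two (x : E³) (t : ℝ) : (x + t • e3) 2 = x 2 + t := by
  simp [e3]

theorem add_smul_e3_apply_zero (x : E³) (t : ℝ) : (x + t • e3) 0 = x 0 := by
  simp [e3]

def awayFromOrbit (a : E³) (r : ℝ) : Set E³ :=
  {y | ∀ m : ℤ, r ≤ dist y (a + (2 * π * m : ℝ) • e3)}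

section AwayFromOrbit

variable {a y : E³} {r : ℝ}

theorem isClosed_awayFromOrbit : IsClosed (awayFromOrbit a r) := by
  simp only [awayFromOrbit, ofPred_forall]
  exact isClosed_iInter fun _ => isClosed_le continuous_const (continuous_id.dist continuous_const)

theorem add_mem_awayFromOrbit (hy : y ∈ awayFromOrbit a r) (m : ℤ) :
    y + (2 * π * m : ℝ) • e3 ∈ awayFromOrbit a r := fun m' => by
  convert hy (m' - m) using 1
  rw [← dist_sub_eq_dist_add_right, add_sub_assoc, ← sub_smul]
  push_cast
  ring_nf

theorem awayFromOrbit_mem_nhds {r' : ℝ} (hy : y ∈ awayFromOrbit a r') (hr : r < r') :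
    awayFromOrbit a r ∈ 𝓝 y :=
  mem_of_superset (ball_mem_nhds y (sub_pos.2 hr)) fun z hz m => by
    linarith [hy m, dist_triangle_left y (a + (2 * π * m : ℝ) • e3) z, mem_ball.1 hz]

theorem ne_add_of_mem_awayFromOrbit (hy : y ∈ awayFromOrbit a r) (hr : 0 < r) (m : ℤ) :
    y ≠ a + (2 * π * m : ℝ) • e3 := by
  rintro rfl
  linarith [hy m, dist_self (a + (2 * π * m : ℝ) • e3)]

end AwayFromOrbit

theorem isCompact_inter_cylRadius_le_inter_slab {K : Set E³} (hK : IsClosed K) (ρ c L : ℝ) :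
    IsCompact (K ∩ {y | cylRadius y ≤ ρ} ∩ {y | |y 2 - c| ≤ L}) := by
  refine Metric.isCompact_of_isClosed_isBounded ?_ ?_
  · exact (hK.inter (isClosed_le continuous_cylRadius continuous_const)).inter
      (isClosed_le (by fun_prop) continuous_const)
  · refine (isBounded_iff_forall_norm_le.2 ⟨ρ + (|c| + L), fun y hy => ?_⟩)
    have hρ : cylRadius y ≤ ρ := hy.1.2
    have hL : |y 2 - c| ≤ L := hy.2
    linarith [norm_le_cylRadius_add_abs y, abs_sub_abs_le_abs_sub (y 2) c]

theorem exists_isMinOn_inter_slab_of_periodic {u : E³ → ℝ} {K : Set E³}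
    (hper : Function.Periodic u ((2 * π) • e3)) (hK : IsClosed K)
    (hKper : ∀ y ∈ K, ∀ m : ℤ, y + (2 * π * m : ℝ) • e3 ∈ K) {ρ c : ℝ}
    (hu : ContinuousOn u (K ∩ {y | cylRadius y ≤ ρ} ∩ {y | |y 2 - c| ≤ 2 * π}))
    (hne : (K ∩ {y | cylRadius y ≤ ρ} ∩ {y | |y 2 - c| ≤ 2 * π}).Nonempty) :
    ∃ x₁ ∈ K ∩ {y | cylRadius y ≤ ρ} ∩ {y | |y 2 - c| ≤ 2 * π}, |x₁ 2 - c| ≤ π ∧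
      IsMinOn u (K ∩ {y | cylRadius y ≤ ρ} ∩ {y | |y 2 - c| ≤ 2 * π}) x₁ := by
  obtain ⟨x₀, hx₀, hmin₀⟩ :=
    (isCompact_inter_cylRadius_le_inter_slab hK ρ c (2 * π)).exists_isMinOn hne hu
  obtain ⟨m, hm⟩ := exists_int_abs_add_mul_sub_le two_pi_pos (x₀ 2) c
  have hslab : |(x₀ + (2 * π * m : ℝ) • e3) 2 - c| ≤ π := by
    rw [add_smul_e3_apply_two]; linarith
  refine ⟨x₀ + (2 * π * m : ℝ) • e3,
    ⟨⟨hKper x₀ hx₀.1.1 m, (cylRadius_add_smul_e3 _ _).trans_le hx₀.1.2⟩,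
      hslab.trans (by linarith [pi_pos])⟩, hslab, fun y hy => ?_⟩
  rw [mem_ofPred_eq, hper.apply_add_mul_int_smul]
  exact hmin₀ hy

theorem minimum_principle_periodic {Φ : E³ → ℝ} {K : Set E³} {A : ℝ}
    (hper : Function.Periodic Φ ((2 * π) • e3)) (hK : IsClosed K)
    (hKper : ∀ y ∈ K, ∀ m : ℤ, y + (2 * π * m : ℝ) • e3 ∈ K)
    (hharm : ∀ y ∈ K, ContDiffAt ℝ 2 Φ y ∧ lap Φ y = 0)
    (hinterior : ∀ y ∈ K, Φ y < A → K ∈ 𝓝 y)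
    (hfar : ∀ᶠ y in comap cylRadius atTop, A ≤ Φ y) {x : E³} (hx : x ∈ K) : A ≤ Φ x := by
  obtain ⟨r, hr⟩ : ∃ r, ∀ y, r ≤ cylRadius y → A ≤ Φ y := by
    obtain ⟨r, hr⟩ := eventually_atTop.1 (eventually_comap.1 hfar)
    exact ⟨r, fun y hy => hr _ hy y rfl⟩
  by_contra! hxA
  have hxr : cylRadius x < r := lt_of_not_ge fun h => (hr x h).not_gt hxA
  set T := K ∩ {y | cylRadius y ≤ r} ∩ {y | |y 2 - x 2| ≤ 2 * π}
  have hxT : x ∈ T := ⟨⟨hx, hxr.le⟩, by simp [pi_pos.le]⟩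
  have hbound : ∀ ε > 0, A - ε * r ^ 2 ≤ Φ x := by
    intro ε hε
    set u : E³ → ℝ := fun y => Φ y - ε * y 0 ^ 2
    have hu_per : Function.Periodic u ((2 * π) • e3) := fun y => by
      simp only [u, hper y, add_smul_e3_apply_zero]
    have hu : ContinuousOn u T := fun y hy =>
      ((hharm y hy.1.1).1.continuousAt.sub (by fun_prop)).continuousWithinAt
    obtain ⟨x₁, hx₁, hslab, hmin₁⟩ :=
      exists_isMinOn_inter_slab_of_periodic hu_per hK hKper hu ⟨x, hxT⟩
    have hAx₁ : A ≤ Φ x₁ := by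
      by_contra! hlt
      have hrx₁ : cylRadius x₁ < r := lt_of_not_ge fun h => (hr x₁ h).not_gt hlt
      have hTx₁ : T ∈ 𝓝 x₁ := by
        filter_upwards [hinterior x₁ hx₁.1.1 hlt,
          continuous_cylRadius.continuousAt.eventually_lt continuousAt_const hrx₁,
          (by fun_prop : Continuous fun y : E³ => |y 2 - x 2|).continuousAt.eventually_lt
            continuousAt_const (hslab.trans_lt (by linarith [pi_pos] : π < 2 * π))]
          with y hyK hyr hyslab
        exact ⟨⟨hyK, hyr.le⟩, hyslab.le⟩
      exact not_isLocalMin_sub_const_mul_sq_apply (hharm x₁ hx₁.1.1).1 (hharm x₁ hx₁.1.1).2 hε 0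
        (hmin₁.isLocalMin hTx₁)
    have hx₁0 : x₁ 0 ^ 2 ≤ r ^ 2 := by
      rw [← sq_abs]
      exact pow_le_pow_left₀ (abs_nonneg _) ((abs_apply_zero_le_cylRadius x₁).trans hx₁.1.2) 2
    calc A - ε * r ^ 2 ≤ u x₁ := by simp only [u]; nlinarith
      _ ≤ u x := hmin₁ hxT
      _ ≤ Φ x := by simp only [u]; nlinarith [sq_nonneg (x 0)]
  have hr0 : 0 < r := (Real.sqrt_nonneg _).trans_lt hxr
  have := hbound ((A - Φ x) / (2 * r ^ 2)) (by positivity)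
  field_simp at this
  linarith

section Poles

variable {X : Type*} [PseudoMetricSpace X] {f : X → ℝ} {a : X} {C : ℝ}

theorem exists_pos_forall_le_of_positive_pole {c : ℝ} (A : ℝ)
    (hf : ∀ y, 0 < dist y a → dist y a < 1 → |f y - c - (2 * dist y a)⁻¹| ≤ C * dist y a) :
    ∃ ρ > 0, ∀ y, 0 < dist y a → dist y a < ρ → A ≤ f y := by
  set M := |A - c| + |C| + 1
  have hM : 1 ≤ M := by linarith [abs_nonneg (A - c), abs_nonneg C]
  refine ⟨(2 * M)⁻¹, by positivity, fun y hy hyρ => ?_⟩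
  set t := dist y a
  have ht1 : t < 1 := hyρ.trans_le (by rw [inv_le_one₀ (by positivity)]; linarith)
  have hinv : M ≤ (2 * t)⁻¹ := by
    rw [mul_inv]; linarith [(lt_inv_comm₀ hy (by positivity)).1 hyρ]
  have hCt : C * t ≤ |C| := by nlinarith [le_abs_self C, abs_nonneg C]
  linarith [(abs_le.1 (hf y hy ht1)).1, le_abs_self (A - c)]

theorem one_lt_of_negative_pole {lam : ℝ} (hlam : 2 + 2 * |C| < lam)
    (hf : ∀ y, 0 < dist y a → dist y a < 1 → |f y - lam + (dist y a)⁻¹| ≤ C * dist y a)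
    {y : X} (hy : 2 / lam ≤ dist y a) (hy1 : dist y a < 1) : 1 < f y := by
  set t := dist y a
  have hlam0 : 0 < lam := by linarith [abs_nonneg C]
  have ht : 0 < t := (div_pos two_pos hlam0).trans_le hy
  have hinv : t⁻¹ ≤ lam / 2 := by
    rw [inv_le_comm₀ ht (by positivity), inv_div]; exact hy
  have hCt : C * t ≤ |C| := by nlinarith [le_abs_self C, abs_nonneg C]
  linarith [(abs_le.1 (hf y ht hy1)).1]

end Poles

section OrbitPoles

variable {Φ : E³ → ℝ} {a : E³} {C : ℝ}

theorem Function.Periodic.exists_pos_forall_le_near_orbit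
    (hper : Function.Periodic Φ ((2 * π) • e3)) {c : ℝ} (A : ℝ)
    (hf : ∀ y, 0 < dist y a → dist y a < 1 → |Φ y - c - (2 * dist y a)⁻¹| ≤ C * dist y a) :
    ∃ ρ > 0, ∀ (m : ℤ) y, 0 < dist y (a + (2 * π * m : ℝ) • e3) →
      dist y (a + (2 * π * m : ℝ) • e3) < ρ → A ≤ Φ y := by
  obtain ⟨ρ, hρ, hnear⟩ := exists_pos_forall_le_of_positive_pole A hf
  exact ⟨ρ, hρ, hper.forall_dist_add_mul_int_smul (P := fun d φ => 0 < d → d < ρ → A ≤ φ) hnear⟩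

theorem Function.Periodic.one_lt_near_orbit (hper : Function.Periodic Φ ((2 * π) • e3))
    {lam : ℝ} (hlam : 2 + 2 * |C| < lam)
    (hf : ∀ y, 0 < dist y a → dist y a < 1 → |Φ y - lam + (dist y a)⁻¹| ≤ C * dist y a)
    (m : ℤ) (y : E³) : 2 / lam ≤ dist y (a + (2 * π * m : ℝ) • e3) →
      dist y (a + (2 * π * m : ℝ) • e3) < 1 → 1 < Φ y :=
  hper.forall_dist_add_mul_int_smul (P := fun d φ => 2 / lam ≤ d → d < 1 → 1 < φ)
    (fun _ => one_lt_of_negative_pole hlam hf) m y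

end OrbitPoles

theorem minimum_principle_awayFromOrbit {ι : Type*} [Finite ι] {Φ : E³ → ℝ} {A : ℝ}
    {a : ι → E³} {r r' : ι → ℝ} (hper : Function.Periodic Φ ((2 * π) • e3))
    (hr : ∀ l, 0 < r l) (hrr' : ∀ l, r l < r' l)
    (hharm : ∀ y, (∀ l (m : ℤ), y ≠ a l + (2 * π * m : ℝ) • e3) →
      ContDiffAt ℝ 2 Φ y ∧ lap Φ y = 0)
    (hnear : ∀ l (m : ℤ) y, r l ≤ dist y (a l + (2 * π * m : ℝ) • e3) →
      dist y (a l + (2 * π * m : ℝ) • e3) < r' l → A ≤ Φ y)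
    (hfar : ∀ᶠ y in comap cylRadius atTop, A ≤ Φ y) {x : E³}
    (hx : x ∈ ⋂ l, awayFromOrbit (a l) (r l)) : A ≤ Φ x :=
  minimum_principle_periodic hper (isClosed_iInter fun _ => isClosed_awayFromOrbit)
    (fun _ hy m => mem_iInter.2 fun l => add_mem_awayFromOrbit (mem_iInter.1 hy l) m)
    (fun y hy => hharm y fun l => ne_add_of_mem_awayFromOrbit (mem_iInter.1 hy l) (hr l))
    (fun y hy hΦ => iInter_mem.2 fun l => awayFromOrbit_mem_nhds
      (fun m => not_lt.1 fun h => (hnear l m y (mem_iInter.1 hy l m) h).not_gt hΦ) (hrr' l))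
    hfar hx

theorem stmt_14_general (n k : ℕ) (C R : ℝ) :
    ∃ lam0 : ℝ, 1 < lam0 ∧
      ∀ (v : ℝ) (p : Fin n → EuclideanSpace ℝ (Fin 3))
        (q : Fin k → EuclideanSpace ℝ (Fin 3))
        (lam : Fin k → ℝ) (c : Fin n → ℝ) (Φ : EuclideanSpace ℝ (Fin 3) → ℝ),
        (∀ x, Φ (x + (2 * Real.pi) • e3) = Φ x) →
        (∀ i, ‖p i‖ ≤ R) → (∀ j, ‖q j‖ ≤ R) →
        (∀ j h, j ≠ h → 5 ≤ dist (q j) (q h)) →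
        (∀ j i, 5 ≤ dist (q j) (p i)) →
        (∀ x : EuclideanSpace ℝ (Fin 3),
          (¬ ∃ i, ∃ m : ℤ, x = p i + ((2 * Real.pi * m : ℝ)) • e3) →
          (¬ ∃ j, ∃ m : ℤ, x = q j + ((2 * Real.pi * m : ℝ)) • e3) →
          ContDiffAt ℝ 2 Φ x ∧ lap Φ x = 0) →
        (∀ j x, 0 < dist x (q j) → dist x (q j) < 1 →
          |Φ x - lam j + (dist x (q j))⁻¹| ≤ C * dist x (q j)) →
        (∀ i x, 0 < dist x (p i) → dist x (p i) < 1 →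
          |Φ x - c i - (2 * dist x (p i))⁻¹| ≤ C * dist x (p i)) →
        (Tendsto Φ (Filter.comap
            (fun x : EuclideanSpace ℝ (Fin 3) => Real.sqrt ((x 0) ^ 2 + (x 1) ^ 2))
            atTop) atTop ∨
          (n = 2 * k ∧ 1 < v ∧
            Tendsto Φ (Filter.comap
              (fun x : EuclideanSpace ℝ (Fin 3) => Real.sqrt ((x 0) ^ 2 + (x 1) ^ 2))
              atTop) (nhds v))) →
        (∀ j, lam0 < lam j) →
        ∃ δ : Fin k → ℝ,
          (∀ j, (lam j)⁻¹ < δ j ∧ δ j ≤ 2 / lam j) ∧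
          ∀ x : EuclideanSpace ℝ (Fin 3),
            (¬ ∃ i, ∃ m : ℤ, x = p i + ((2 * Real.pi * m : ℝ)) • e3) →
            (∀ j, ∀ m : ℤ, δ j ≤ dist x (q j + ((2 * Real.pi * m : ℝ)) • e3)) →
            1 ≤ Φ x := by
  refine ⟨2 + 2 * |C|, by linarith [abs_nonneg C], ?_⟩
  intro v p q lam c Φ hper _ _ _ _ hharm hqexp hpexp hinf hlam
  replace hper : Function.Periodic Φ ((2 * π) • e3) := hper
  have hlam_pos : ∀ j, 0 < lam j := fun j => by linarith [hlam j, abs_nonneg C]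
  choose ρ hρ hnear_p using fun i => hper.exists_pos_forall_le_near_orbit 1 (hpexp i)
  have hnear_q := fun j => hper.one_lt_near_orbit (hlam j) (hqexp j)
  have hfar : ∀ᶠ y in comap cylRadius atTop, 1 ≤ Φ y := by
    rcases hinf with h | ⟨-, hv, h⟩
    · exact h.eventually (eventually_ge_atTop 1)
    · exact h.eventually (eventually_ge_nhds hv)
  refine ⟨fun j => 2 / lam j, fun j => ⟨?_, le_rfl⟩, fun x hxp hxq => ?_⟩
  · rw [inv_eq_one_div]; exact div_lt_div_of_pos_right one_lt_two (hlam_pos j)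
  by_cases hxK : x ∈ ⋂ l, awayFromOrbit (Sum.elim q p l)
      (Sum.elim (fun j => 2 / lam j) (fun i => ρ i / 2) l)
  · refine minimum_principle_awayFromOrbit (r' := Sum.elim 1 ρ) hper ?_ ?_
      (fun y hy => hharm y (fun ⟨i, m, h⟩ => hy (.inr i) m h) fun ⟨j, m, h⟩ => hy (.inl j) m h)
      ?_ hfar hxK
    · rintro (j | i)
      exacts [div_pos two_pos (hlam_pos j), half_pos (hρ i)]
    · rintro (j | i)
      exacts [(div_lt_one (hlam_pos j)).2 (by linarith [hlam j, abs_nonneg C]),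
        half_lt_self (hρ i)]
    · rintro (j | i) m y hy hy'
      exacts [(hnear_q j m y hy hy').le, hnear_p i m y ((half_pos (hρ i)).trans_le hy) hy']
  obtain ⟨i, m, hlt⟩ : ∃ i, ∃ m : ℤ, dist x (p i + (2 * π * m : ℝ) • e3) < ρ i / 2 := by
    simpa [awayFromOrbit, hxq] using hxK
  exact hnear_p i m x (dist_pos.2 fun h => hxp ⟨i, m, h⟩) (hlt.trans (half_lt_self (hρ i)))

theorem stmt_14 (n k : ℕ) (C R : ℝ) (hC : 0 < C) (hR : 0 < R) :
    ∃ lam0 : ℝ, 1 < lam0 ∧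
      ∀ (v : ℝ) (p : Fin n → EuclideanSpace ℝ (Fin 3))
        (q : Fin k → EuclideanSpace ℝ (Fin 3))
        (lam : Fin k → ℝ) (c : Fin n → ℝ) (Φ : EuclideanSpace ℝ (Fin 3) → ℝ),
        (∀ x, Φ (x + (2 * Real.pi) • e3) = Φ x) →
        (∀ i, ‖p i‖ ≤ R) → (∀ j, ‖q j‖ ≤ R) →
        (∀ j h, j ≠ h → 5 ≤ dist (q j) (q h)) →
        (∀ j i, 5 ≤ dist (q j) (p i)) →
        (∀ x : EuclideanSpace ℝ (Fin 3),
          (¬ ∃ i, ∃ m : ℤ, x = p i + ((2 * Real.pi * m : ℝ)) • e3) →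
          (¬ ∃ j, ∃ m : ℤ, x = q j + ((2 * Real.pi * m : ℝ)) • e3) →
          ContDiffAt ℝ 2 Φ x ∧ lap Φ x = 0) →
        (∀ j x, 0 < dist x (q j) → dist x (q j) < 1 →
          |Φ x - lam j + (dist x (q j))⁻¹| ≤ C * dist x (q j)) →
        (∀ i x, 0 < dist x (p i) → dist x (p i) < 1 →
          |Φ x - c i - (2 * dist x (p i))⁻¹| ≤ C * dist x (p i)) →
        (Tendsto Φ (Filter.comap
            (fun x : EuclideanSpace ℝ (Fin 3) => Real.sqrt ((x 0) ^ 2 + (x 1) ^ 2))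
            atTop) atTop ∨
          (n = 2 * k ∧ 1 < v ∧
            Tendsto Φ (Filter.comap
              (fun x : EuclideanSpace ℝ (Fin 3) => Real.sqrt ((x 0) ^ 2 + (x 1) ^ 2))
              atTop) (nhds v))) →
        (∀ j, lam0 < lam j) →
        ∃ δ : Fin k → ℝ,
          (∀ j, (lam j)⁻¹ < δ j ∧ δ j ≤ 2 / lam j) ∧
          ∀ x : EuclideanSpace ℝ (Fin 3),
            (¬ ∃ i, ∃ m : ℤ, x = p i + ((2 * Real.pi * m : ℝ)) • e3) →
            (∀ j, ∀ m : ℤ, δ j ≤ dist x (q j + ((2 * Real.pi * m : ℝ)) • e3)) →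
            1 ≤ Φ x :=
  stmt_14_general n k C R

end
end

section
/- Let 0 < δ < 1/2 and let N > 2, λ > 1 with Nλ^{-1/2} < 1/2. Let o be a smooth 1-form on ℝ³ supported in {ρ ≥ Nλ^{-1/2}} with |o| ≤ Cρ^{-2} and |do| ≤ C ρ^{-2}|∇χ| where χ is a cutoff with ∇χ supported in Nλ^{-1/2} ≤ ρ ≤ 2Nλ^{-1/2} and |∇χ| ≤ 2N^{-1}λ^{1/2}. Then with the weight w(x) = √(λ^{-2}+ρ²), ‖w^{δ+(1/2)} do‖_{L²} ≤ C' (N^{-2}λ)^{(1-δ)/2} for a constant C' depending only on C and δ. -/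
/- Since `|do| ≤ C ρ⁻² |∇χ|`, the form `do` vanishes off the annulus `a ≤ ρ ≤ 2a`, `a = Nλ^{-1/2}`,
that carries `∇χ`. There `λ⁻¹ ≤ a` makes the weight at most `3a`, and `|do| ≤ 2C a⁻³`, so the
integrand is at most `(3a)^{2δ+1} (2C a⁻³)²` on a ball of volume `≍ a³`. This gives
`a^{2δ-2} = (N⁻²λ)^{1-δ}` up to a constant. -/

open MeasureTheory Metric

theorem integral_le_measureReal_mul_of_ae_le_indicator {X : Type*} [MeasurableSpace X]
    {μ : Measure X} {f : X → ℝ} {s : Set X} {K : ℝ} (hs : MeasurableSet s) (hμs : μ s ≠ ⊤)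
    (hf : 0 ≤ᵐ[μ] f) (hfK : ∀ᵐ x ∂μ, f x ≤ s.indicator (fun _ => K) x) :
    ∫ x, f x ∂μ ≤ μ.real s * K :=
  calc ∫ x, f x ∂μ ≤ ∫ x, s.indicator (fun _ => K) x ∂μ :=
        integral_mono_of_nonneg hf ((integrableOn_const hμs).integrable_indicator hs) hfK
    _ = μ.real s * K := by rw [integral_indicator_const _ hs, smul_eq_mul]

theorem sqrt_sq_add_sq_le_three_mul {ε r a : ℝ} (hε : 0 ≤ ε) (hεa : ε ≤ a) (har : a ≤ r)
    (hr : r ≤ 2 * a) : √(ε ^ 2 + r ^ 2) ≤ 3 * a := by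
  rw [Real.sqrt_le_left (by linarith)]
  nlinarith

theorem inv_le_div_sqrt {N lam : ℝ} (hN : 1 ≤ N) (hlam : 1 ≤ lam) : lam⁻¹ ≤ N / √lam := by
  have hsqrt : 1 ≤ √lam := Real.one_le_sqrt.2 hlam
  calc lam⁻¹ = (√lam)⁻¹ * (√lam)⁻¹ := by rw [← mul_inv, Real.mul_self_sqrt (by positivity)]
    _ ≤ 1 * (√lam)⁻¹ := by gcongr; exact inv_le_one_of_one_le₀ hsqrt
    _ ≤ N / √lam := by rw [div_eq_mul_inv]; gcongr

theorem inv_sq_mul_eq_inv_div_sqrt_sq (N : ℝ) {lam : ℝ} (hlam : 0 ≤ lam) :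
    N⁻¹ ^ 2 * lam = ((N / √lam) ^ 2)⁻¹ := by
  rw [div_pow, Real.sq_sqrt hlam, inv_div, div_eq_mul_inv, inv_pow, mul_comm]

theorem rpow_two_mul_add_one_div_pow_three {a : ℝ} (ha : 0 < a) (δ : ℝ) :
    a ^ (2 * δ + 1) / a ^ 3 = ((a ^ 2)⁻¹) ^ (1 - δ) := by
  rw [← Real.rpow_natCast, ← Real.rpow_natCast, ← Real.rpow_neg_one, ← Real.rpow_mul ha.le,
    ← Real.rpow_mul ha.le, ← Real.rpow_sub ha]
  norm_num
  ring_nf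

section Annulus

variable {E F G : Type*} [NormedAddCommGroup E] [SeminormedAddCommGroup F]
  [SeminormedAddCommGroup G] {Dχ : E → F} {Do : E → G} {ε a C p : ℝ}

theorem sqrt_sq_add_norm_sq_rpow_mul_sq_le_indicator (hε : 0 ≤ ε) (hεa : ε ≤ a) (hC : 0 ≤ C)
    (hp : 0 ≤ p) (hsupp : ∀ x, Dχ x ≠ 0 → a ≤ ‖x‖ ∧ ‖x‖ ≤ 2 * a) (hDχ : ∀ x, ‖Dχ x‖ ≤ 2 / a)
    (hDo : ∀ x, x ≠ 0 → ‖Do x‖ ≤ C * (‖x‖ ^ 2)⁻¹ * ‖Dχ x‖) {x : E} (hx : x ≠ 0) :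
    √(ε ^ 2 + ‖x‖ ^ 2) ^ p * ‖Do x‖ ^ 2 ≤
      (closedBall 0 (2 * a)).indicator (fun _ => (3 * a) ^ p * (2 * C / a ^ 3) ^ 2) x := by
  have ha : 0 ≤ a := hε.trans hεa
  by_cases hDχx : Dχ x = 0
  · have hDox : ‖Do x‖ = 0 := le_antisymm (by simpa [hDχx] using hDo x hx) (norm_nonneg _)
    rw [hDox, zero_pow two_ne_zero, mul_zero]
    exact Set.indicator_nonneg (fun _ _ => by positivity) x
  obtain ⟨hax, hx2a⟩ := hsupp x hDχx
  replace ha : 0 < a := by linarith [norm_pos_iff.2 hx]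
  have hw : √(ε ^ 2 + ‖x‖ ^ 2) ^ p ≤ (3 * a) ^ p :=
    Real.rpow_le_rpow (Real.sqrt_nonneg _) (sqrt_sq_add_sq_le_three_mul hε hεa hax hx2a) hp
  have hDox : ‖Do x‖ ≤ 2 * C / a ^ 3 :=
    calc ‖Do x‖ ≤ C * (‖x‖ ^ 2)⁻¹ * ‖Dχ x‖ := hDo x hx
      _ ≤ C * (a ^ 2)⁻¹ * (2 / a) := by gcongr; exact hDχ x
      _ = 2 * C / a ^ 3 := by field_simp
  rw [Set.indicator_of_mem (mem_closedBall_zero_iff.2 hx2a)]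
  gcongr

theorem integral_sqrt_sq_add_norm_sq_rpow_mul_sq_le [NormedSpace ℝ E] [FiniteDimensional ℝ E]
    [Nontrivial E] [MeasurableSpace E] [BorelSpace E] (μ : Measure E) [μ.IsAddHaarMeasure]
    (hε : 0 ≤ ε) (hεa : ε ≤ a) (hC : 0 ≤ C) (hp : 0 ≤ p)
    (hsupp : ∀ x, Dχ x ≠ 0 → a ≤ ‖x‖ ∧ ‖x‖ ≤ 2 * a) (hDχ : ∀ x, ‖Dχ x‖ ≤ 2 / a)
    (hDo : ∀ x, x ≠ 0 → ‖Do x‖ ≤ C * (‖x‖ ^ 2)⁻¹ * ‖Dχ x‖) :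
    ∫ x, √(ε ^ 2 + ‖x‖ ^ 2) ^ p * ‖Do x‖ ^ 2 ∂μ ≤
      (2 * a) ^ Module.finrank ℝ E * μ.real (closedBall 0 1) *
        ((3 * a) ^ p * (2 * C / a ^ 3) ^ 2) := by
  rw [← Measure.addHaar_real_closedBall' μ 0 (by linarith)]
  refine integral_le_measureReal_mul_of_ae_le_indicator measurableSet_closedBall
    measure_closedBall_lt_top.ne (.of_forall fun x => by positivity) ?_
  filter_upwards [compl_mem_ae_iff.2 (measure_singleton 0)] with x hx
  exact sqrt_sq_add_norm_sq_rpow_mul_sq_le_indicator hε hεa hC hp hsupp hDχ hDo hx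

end Annulus

-- `‖fderiv ℝ o x‖` stands for `|do|`, which it dominates up to a dimensional constant.
theorem stmt_15_general (δ C : ℝ) (hδ1 : 0 < δ) (hC : 0 < C) :
    ∃ C' > (0:ℝ), ∀ (N lam : ℝ) (χ : EuclideanSpace ℝ (Fin 3) → ℝ)
      (o : EuclideanSpace ℝ (Fin 3) → EuclideanSpace ℝ (Fin 3) →L[ℝ] ℝ),
      2 < N → 1 < lam → N / Real.sqrt lam < 1 / 2 →
      (∀ x, o x ≠ 0 → N / Real.sqrt lam ≤ ‖x‖) →
      (∀ x : EuclideanSpace ℝ (Fin 3), x ≠ 0 → ‖o x‖ ≤ C * (‖x‖ ^ 2)⁻¹) →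
      (∀ x, fderiv ℝ χ x ≠ 0 → N / Real.sqrt lam ≤ ‖x‖ ∧ ‖x‖ ≤ 2 * N / Real.sqrt lam) →
      (∀ x, ‖fderiv ℝ χ x‖ ≤ 2 * Real.sqrt lam / N) →
      (∀ x : EuclideanSpace ℝ (Fin 3), x ≠ 0 →
        ‖fderiv ℝ o x‖ ≤ C * (‖x‖ ^ 2)⁻¹ * ‖fderiv ℝ χ x‖) →
      Real.sqrt (∫ x : EuclideanSpace ℝ (Fin 3),
          Real.sqrt (lam⁻¹ ^ 2 + ‖x‖ ^ 2) ^ (2 * δ + 1) * ‖fderiv ℝ o x‖ ^ 2)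
        ≤ C' * (N⁻¹ ^ 2 * lam) ^ ((1 - δ) / 2) := by
  set V := volume.real (closedBall (0 : EuclideanSpace ℝ (Fin 3)) 1)
  have hV : 0 < V := ENNReal.toReal_pos (measure_closedBall_pos _ _ one_pos).ne'
    measure_closedBall_lt_top.ne
  refine ⟨C * √(32 * 3 ^ (2 * δ + 1) * V), by positivity, ?_⟩
  intro N lam χ o hN hlam _ _ _ hχsupp hχ hdo
  set a := N / √lam
  have ha : 0 < a := by positivity
  have hlam_inv : lam⁻¹ ≤ a := inv_le_div_sqrt (by linarith) hlam.le
  have hint := integral_sqrt_sq_add_norm_sq_rpow_mul_sq_le volume (Do := fderiv ℝ o)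
    (by positivity) hlam_inv hC.le (by positivity : 0 ≤ 2 * δ + 1)
    (fun x hx => by rw [mul_div_assoc] at hχsupp; exact hχsupp x hx)
    (fun x => by rw [div_div_eq_mul_div]; exact hχ x) hdo
  rw [finrank_euclideanSpace_fin, Real.mul_rpow (by norm_num) ha.le] at hint
  have hsq : ((a ^ 2)⁻¹ ^ ((1 - δ) / 2)) ^ 2 = (a ^ 2)⁻¹ ^ (1 - δ) := by
    rw [← Real.rpow_natCast, ← Real.rpow_mul (by positivity)]; norm_num
  rw [Real.sqrt_le_left (by positivity), inv_sq_mul_eq_inv_div_sqrt_sq N (by positivity), mul_pow,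
    mul_pow, Real.sq_sqrt (by positivity), hsq, ← rpow_two_mul_add_one_div_pow_three ha]
  refine hint.trans_eq ?_
  field_simp
  ring

theorem stmt_15 (δ C : ℝ) (hδ1 : 0 < δ) (hδ2 : δ < 1 / 2) (hC : 0 < C) :
    ∃ C' > (0:ℝ), ∀ (N lam : ℝ) (χ : EuclideanSpace ℝ (Fin 3) → ℝ)
      (o : EuclideanSpace ℝ (Fin 3) → EuclideanSpace ℝ (Fin 3) →L[ℝ] ℝ),
      2 < N → 1 < lam → N / Real.sqrt lam < 1 / 2 →
      (∀ x, o x ≠ 0 → N / Real.sqrt lam ≤ ‖x‖) →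
      (∀ x : EuclideanSpace ℝ (Fin 3), x ≠ 0 → ‖o x‖ ≤ C * (‖x‖ ^ 2)⁻¹) →
      (∀ x, fderiv ℝ χ x ≠ 0 → N / Real.sqrt lam ≤ ‖x‖ ∧ ‖x‖ ≤ 2 * N / Real.sqrt lam) →
      (∀ x, ‖fderiv ℝ χ x‖ ≤ 2 * Real.sqrt lam / N) →
      (∀ x : EuclideanSpace ℝ (Fin 3), x ≠ 0 →
        ‖fderiv ℝ o x‖ ≤ C * (‖x‖ ^ 2)⁻¹ * ‖fderiv ℝ χ x‖) →
      Real.sqrt (∫ x : EuclideanSpace ℝ (Fin 3),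
          Real.sqrt (lam⁻¹ ^ 2 + ‖x‖ ^ 2) ^ (2 * δ + 1) * ‖fderiv ℝ o x‖ ^ 2)
        ≤ C' * (N⁻¹ ^ 2 * lam) ^ ((1 - δ) / 2) :=
  stmt_15_general δ C hδ1 hC
end
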